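/- arXiv:math/9204223 — 2 statements merged into one kernel-verified Lean document; each statement's English description precedes it below -/
import Mathlib

section
/- Let J : V → V be a linear map on a finite-dimensional real vector space with J² = -Id. Then the space L(V,V) × L(V,V) decomposes as a direct sum N¹ ⊕ N² ⊕ N³ ⊕ N⁴, where N¹ = {(H,0) : JHJ = H}, N² = {(0,A) : JAJ = A}, N³ = {(H,A) : JHJ = -H and H = A}, N⁴ = {(H,A) : JHJ = -H and H = -A}. -/
open Matrix

/-- For `J` with `J² = -Id`, every pair `(H,A)` of endomorphisms decomposes
uniquely as a sum `P₁ + P₂ + P₃ + P₄` with `P₁ ∈ N¹`, `P₂ ∈ N²`, `P₃ ∈ N³`, `P₄ ∈ N⁴`,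
where `N¹ = {(H,0) : JHJ = H}`, `N² = {(0,A) : JAJ = A}`,
`N³ = {(H,A) : JHJ = -H, H = A}`, `N⁴ = {(H,A) : JHJ = -H, H = -A}`. -/
theorem four_space_decomposition {n : ℕ}
    (J : Matrix (Fin n) (Fin n) ℝ) (hJ : J * J = -1)
    (P : Matrix (Fin n) (Fin n) ℝ × Matrix (Fin n) (Fin n) ℝ) :
    ∃! q : (Matrix (Fin n) (Fin n) ℝ × Matrix (Fin n) (Fin n) ℝ) ×
           (Matrix (Fin n) (Fin n) ℝ × Matrix (Fin n) (Fin n) ℝ) ×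
           (Matrix (Fin n) (Fin n) ℝ × Matrix (Fin n) (Fin n) ℝ) ×
           (Matrix (Fin n) (Fin n) ℝ × Matrix (Fin n) (Fin n) ℝ),
      (q.1.2 = 0 ∧ J * q.1.1 * J = q.1.1) ∧
      (q.2.1.1 = 0 ∧ J * q.2.1.2 * J = q.2.1.2) ∧
      (J * q.2.2.1.1 * J = -q.2.2.1.1 ∧ q.2.2.1.1 = q.2.2.1.2) ∧
      (J * q.2.2.2.1 * J = -q.2.2.2.1 ∧ q.2.2.2.1 = -q.2.2.2.2) ∧
      P = q.1 + q.2.1 + q.2.2.1 + q.2.2.2 := by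
  have conj : ∀ X : Matrix (Fin n) (Fin n) ℝ, J * (J * X * J) * J = X := by
    intro X
    have h : J * (J * X * J) * J = (J * J) * X * (J * J) := by noncomm_ring
    rw [h, hJ]; simp
  obtain ⟨H, A⟩ := P
  set Hp := (1/2:ℝ) • (H + J * H * J) with hHp
  set Hm := (1/2:ℝ) • (H - J * H * J) with hHm
  set Ap := (1/2:ℝ) • (A + J * A * J) with hAp
  set Am := (1/2:ℝ) • (A - J * A * J) with hAm
  set M := (1/2:ℝ) • (Hm + Am) with hM
  set N := (1/2:ℝ) • (Hm - Am) with hN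
  have cHp : J * Hp * J = Hp := by
    rw [hHp, Matrix.mul_smul, Matrix.smul_mul]
    congr 1
    rw [mul_add, add_mul, conj]; exact add_comm _ _
  have cAp : J * Ap * J = Ap := by
    rw [hAp, Matrix.mul_smul, Matrix.smul_mul]
    congr 1
    rw [mul_add, add_mul, conj]; exact add_comm _ _
  have cHm : J * Hm * J = -Hm := by
    rw [hHm, Matrix.mul_smul, Matrix.smul_mul, ← smul_neg]
    congr 1
    rw [mul_sub, sub_mul, conj, neg_sub]
  have cAm : J * Am * J = -Am := by
    rw [hAm, Matrix.mul_smul, Matrix.smul_mul, ← smul_neg]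
    congr 1
    rw [mul_sub, sub_mul, conj, neg_sub]
  have cM : J * M * J = -M := by
    rw [hM, Matrix.mul_smul, Matrix.smul_mul, ← smul_neg]
    congr 1
    rw [mul_add, add_mul, cHm, cAm, neg_add]
  have cN : J * N * J = -N := by
    rw [hN, Matrix.mul_smul, Matrix.smul_mul, ← smul_neg]
    congr 1
    rw [mul_sub, sub_mul, cHm, cAm, neg_sub, neg_sub_neg]
  refine ⟨⟨⟨Hp, 0⟩, ⟨0, Ap⟩, ⟨M, M⟩, ⟨N, -N⟩⟩,
    ⟨⟨rfl, cHp⟩, ⟨rfl, cAp⟩, ⟨cM, rfl⟩, ⟨cN, (neg_neg N).symm⟩, ?_⟩, ?_⟩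
  · apply Prod.ext
    · show H = Hp + 0 + M + N
      rw [hM, hN, hHp, hHm, hAm]; module
    · show A = 0 + Ap + M + -N
      rw [hM, hN, hAp, hHm, hAm]; module
  · rintro ⟨⟨a, b⟩, ⟨c, d⟩, ⟨e, f⟩, ⟨g, h₀⟩⟩
    rintro ⟨⟨hb, ha⟩, ⟨hc, hd⟩, ⟨he, hef⟩, ⟨hg, hgh⟩, hsum⟩
    simp only at ha hb hc hd he hef hg hgh hsum
    have hgh' : h₀ = -g := by rw [hgh, neg_neg]
    subst hb hc hef hgh'
    have h1 : H = a + e + g := by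
      have := congrArg Prod.fst hsum
      simpa using this
    have h2 : A = d + e + -g := by
      have := congrArg Prod.snd hsum
      simp at this
      rw [this]
    have hJH : J * H * J = a - e - g := by
      rw [h1, mul_add, mul_add, add_mul, add_mul, ha, he, hg]; abel
    have hJA : J * A * J = d - e + g := by
      rw [h2, mul_add, mul_add, add_mul, add_mul, hd, he]
      simp only [Matrix.mul_neg, Matrix.neg_mul, hg]
      abel
    have ea : a = Hp := by rw [hHp, hJH, h1]; module
    have ed : d = Ap := by rw [hAp, hJA, h2]; module
    have ee : e = M := by rw [hM, hHm, hAm, hJH, hJA, h1, h2]; module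
    have eg : g = N := by rw [hN, hHm, hAm, hJH, hJA, h1, h2]; module
    simp [ea, ed, ee, eg]
end

section
/- Let J : V → V satisfy J² = -Id, and equip L(V,V) × L(V,V) with the bilinear form G((H₁,A₁),(H₂,A₂)) = tr(H₁H₂) + tr(A₁A₂). Then the subspace N⁴ = {(H,A) : JHJ = -H, A = -H} is G-orthogonal to the subspace T = {(H,A) : JH + HJ = JA + AJ}. -/
open Matrix

/-- With `G((H₁,A₁),(H₂,A₂)) = tr(H₁H₂) + tr(A₁A₂)`, the subspace
`N⁴ = {(H,A) : JHJ = -H, A = -H}` is `G`-orthogonal to the tangent space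
`{(H,A) : JH + HJ = JA + AJ}`. -/
theorem N4_orthogonal_to_tangent {n : ℕ}
    (J : Matrix (Fin n) (Fin n) ℝ) (hJ : J * J = -1)
    (H A X Y : Matrix (Fin n) (Fin n) ℝ)
    (hN4 : J * H * J = -H ∧ A = -H)
    (hT : J * X + X * J = J * Y + Y * J) :
    (H * X).trace + (A * Y).trace = 0 := by
  obtain ⟨h1, h2⟩ := hN4
  subst h2
  -- D := X - Y anticommutes with J
  have hD : J * (X - Y) = -((X - Y) * J) := by
    linear_combination (norm := noncomm_ring) hT
  have hDJ : J * (X - Y) * J = X - Y := by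
    calc J * (X - Y) * J = -((X - Y) * J) * J := by rw [hD]
      _ = -((X - Y) * (J * J)) := by noncomm_ring
      _ = X - Y := by rw [hJ]; noncomm_ring
  have hH : H = -(J * H * J) := by rw [h1, neg_neg]
  have key : (H * (X - Y)).trace = 0 := by
    have e1 : (H * (X - Y)).trace = -((J * H * J) * (X - Y)).trace := by
      rw [← trace_neg, ← Matrix.neg_mul, ← hH]
    have e2 : ((J * H * J) * (X - Y)).trace = (H * (J * (X - Y) * J)).trace := by
      rw [show (J * H * J) * (X - Y) = J * (H * (J * (X - Y))) by noncomm_ring]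
      rw [trace_mul_comm]
      noncomm_ring
    rw [e2, hDJ] at e1
    linarith
  have : (H * X).trace - (H * Y).trace = 0 := by
    rw [← trace_sub, ← Matrix.mul_sub]; exact key
  simp only [Matrix.neg_mul, trace_neg]
  linarith
end
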